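/- arXiv:2508.14147 — 5 statements merged into one kernel-verified Lean document; each statement's English description precedes it below -/
import Mathlib

section
/- Let G be a temporal graph, k ≥ 1 an integer, ts a start time, and e = (u,v,t) a temporal edge with t ≥ ts. Then the edge core time CT_ts(e) exists if and only if both vertex core times CT_ts(u) and CT_ts(v) exist; and in that case CT_ts(e) = max(CT_ts(u), CT_ts(v), t). -/
variable {V : Type*} [Fintype V]

/-- A vertex set `S` is `k`-dense in `G` if every vertex of `S` has
at least `k` neighbors of `G` lying in `S`. -/
def KDense (G : SimpleGraph V) (k : ℕ) (S : Set V) : Prop :=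
  ∀ v ∈ S, k ≤ (S ∩ G.neighborSet v).ncard

/-- The `k`-core of `G`: the union of all `k`-dense vertex sets. -/
def kCore (G : SimpleGraph V) (k : ℕ) : Set V :=
  ⋃₀ {S | KDense G k S}

/-- A temporal graph on a vertex set `V`: a finite set of temporal edges
`(u, v, t)` with `u ≠ v` and integer timestamp `t`. -/
structure TemporalGraph (V : Type*) where
  E : Finset (V × V × ℤ)
  ne : ∀ e ∈ E, e.1 ≠ e.2.1

/-- The projected (snapshot) graph of `G` over the time window `[ts, te]`. -/
def TemporalGraph.proj (G : TemporalGraph V) (ts te : ℤ) : SimpleGraph V where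
  Adj u v := ∃ t, ts ≤ t ∧ t ≤ te ∧ ((u, v, t) ∈ G.E ∨ (v, u, t) ∈ G.E)
  symm := by
    constructor
    rintro u v ⟨t, h1, h2, h3⟩
    exact ⟨t, h1, h2, h3.symm⟩
  loopless := by
    constructor
    rintro u ⟨t, h1, h2, h3⟩
    rcases h3 with h | h <;> exact G.ne _ h rfl

/-- The temporal `k`-core of the window `[ts, te]`: all temporal edges with
timestamp in `[ts, te]` whose both endpoints lie in the `k`-core of the
projected graph `G_[ts,te]`. -/
def TemporalGraph.tCore (G : TemporalGraph V) (k : ℕ) (ts te : ℤ) :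
    Set (V × V × ℤ) :=
  {e | e ∈ G.E ∧ ts ≤ e.2.2 ∧ e.2.2 ≤ te ∧
    e.1 ∈ kCore (G.proj ts te) k ∧ e.2.1 ∈ kCore (G.proj ts te) k}


/-! An edge `(u, v, t)` lies in the temporal core of `[ts, te]` exactly when `te ≥ t` and both
endpoints lie in the `k`-core of `G_[ts,te]`. Enlarging the window only adds edges to the projected
graph, so it can only enlarge the `k`-core: the ends `te` that put `u` in the core form an up-set
`[CT_ts(u), ∞)` of `ℤ`, and likewise for `v`. The ends that put the edge in the temporal core form
the intersection `[CT_ts(u), ∞) ∩ [CT_ts(v), ∞) ∩ [t, ∞)`, whose least element is the maximum. -/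

theorem IsUpperSet.eq_Ici_of_isLeast {α : Type*} [Preorder α] {s : Set α} {a : α}
    (hs : IsUpperSet s) (ha : IsLeast s a) : s = Set.Ici a :=
  Set.Subset.antisymm (fun _ hx => ha.2 hx) (hs.Ici_subset ha.1)

theorem KDense.mono {G G' : SimpleGraph V} (h : G ≤ G') {k : ℕ} {S : Set V}
    (hS : KDense G k S) : KDense G' k S := fun v hv =>
  (hS v hv).trans <|
    Set.ncard_le_ncard (Set.inter_subset_inter_right _ fun _ hx => h hx) (Set.toFinite _)

theorem kCore_mono {G G' : SimpleGraph V} (h : G ≤ G') (k : ℕ) : kCore G k ⊆ kCore G' k :=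
  Set.sUnion_mono fun _ hS => KDense.mono h hS

namespace TemporalGraph

omit [Fintype V] in
theorem proj_mono (G : TemporalGraph V) (ts : ℤ) : Monotone (G.proj ts) :=
  fun _ _ h _ _ ⟨s, hts, hs, hE⟩ => ⟨s, hts, hs.trans h, hE⟩

def coreTimes (G : TemporalGraph V) (k : ℕ) (ts : ℤ) (u : V) : Set ℤ :=
  {x | ts ≤ x ∧ u ∈ kCore (G.proj ts x) k}

theorem isUpperSet_coreTimes (G : TemporalGraph V) (k : ℕ) (ts : ℤ) (u : V) :
    IsUpperSet (G.coreTimes k ts u) :=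
  fun _ _ hxy ⟨hts, hu⟩ => ⟨hts.trans hxy, kCore_mono (G.proj_mono ts hxy) k hu⟩

omit [Fintype V] in
theorem exists_isLeast_coreTimes {G : TemporalGraph V} {k : ℕ} {ts : ℤ} {u : V} {x : ℤ}
    (hx : x ∈ G.coreTimes k ts u) : ∃ a, IsLeast (G.coreTimes k ts u) a :=
  have hbdd : BddBelow (G.coreTimes k ts u) := ⟨ts, fun _ hy => hy.1⟩
  ⟨sInf _, Int.csInf_mem ⟨x, hx⟩ hbdd, fun _ hy => csInf_le hbdd hy⟩

omit [Fintype V] in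
theorem setOf_mem_tCore_eq {G : TemporalGraph V} {k : ℕ} {ts : ℤ} {u v : V} {t : ℤ}
    (he : (u, v, t) ∈ G.E) (ht : ts ≤ t) :
    {x | (u, v, t) ∈ G.tCore k ts x} =
      G.coreTimes k ts u ∩ G.coreTimes k ts v ∩ Set.Ici t := by
  ext x
  simp only [tCore, coreTimes, Set.mem_ofPred_eq, Set.mem_inter_iff, Set.mem_Ici]
  constructor
  · rintro ⟨-, -, htx, hu, hv⟩
    exact ⟨⟨⟨ht.trans htx, hu⟩, ht.trans htx, hv⟩, htx⟩
  · rintro ⟨⟨⟨-, hu⟩, -, hv⟩, htx⟩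
    exact ⟨he, ht, htx, hu, hv⟩

theorem isLeast_setOf_mem_tCore {G : TemporalGraph V} {k : ℕ} {ts : ℤ} {u v : V} {t a b : ℤ}
    (he : (u, v, t) ∈ G.E) (ht : ts ≤ t) (ha : IsLeast (G.coreTimes k ts u) a)
    (hb : IsLeast (G.coreTimes k ts v) b) :
    IsLeast {x | (u, v, t) ∈ G.tCore k ts x} (max (max a b) t) := by
  rw [setOf_mem_tCore_eq he ht, (G.isUpperSet_coreTimes k ts u).eq_Ici_of_isLeast ha,
    (G.isUpperSet_coreTimes k ts v).eq_Ici_of_isLeast hb, Set.Ici_inter_Ici, Set.Ici_inter_Ici]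
  exact isLeast_Ici

end TemporalGraph

theorem edge_core_time_eq_max_general (G : TemporalGraph V) (k : ℕ)
    (ts : ℤ) (u v : V) (t : ℤ) (he : (u, v, t) ∈ G.E) (ht : ts ≤ t) :
    ((∃ cte, IsLeast {x : ℤ | (u, v, t) ∈ G.tCore k ts x} cte) ↔
      ((∃ a, IsLeast {x : ℤ | ts ≤ x ∧ u ∈ kCore (G.proj ts x) k} a) ∧
       (∃ b, IsLeast {x : ℤ | ts ≤ x ∧ v ∈ kCore (G.proj ts x) k} b))) ∧
    (∀ cte a b, IsLeast {x : ℤ | (u, v, t) ∈ G.tCore k ts x} cte →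
      IsLeast {x : ℤ | ts ≤ x ∧ u ∈ kCore (G.proj ts x) k} a →
      IsLeast {x : ℤ | ts ≤ x ∧ v ∈ kCore (G.proj ts x) k} b →
      cte = max (max a b) t) := by
  have hleast := fun a b => G.isLeast_setOf_mem_tCore (k := k) (a := a) (b := b) he ht
  refine ⟨⟨fun ⟨_, hcte⟩ => ?_, fun ⟨⟨a, ha⟩, ⟨b, hb⟩⟩ => ⟨_, hleast a b ha hb⟩⟩,
    fun _ a b hcte ha hb => hcte.unique (hleast a b ha hb)⟩
  rw [G.setOf_mem_tCore_eq he ht] at hcte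
  exact ⟨G.exists_isLeast_coreTimes hcte.1.1.1, G.exists_isLeast_coreTimes hcte.1.1.2⟩

theorem edge_core_time_eq_max (G : TemporalGraph V) (k : ℕ) (hk : 1 ≤ k)
    (ts : ℤ) (u v : V) (t : ℤ) (he : (u, v, t) ∈ G.E) (ht : ts ≤ t) :
    ((∃ cte, IsLeast {x : ℤ | (u, v, t) ∈ G.tCore k ts x} cte) ↔
      ((∃ a, IsLeast {x : ℤ | ts ≤ x ∧ u ∈ kCore (G.proj ts x) k} a) ∧
       (∃ b, IsLeast {x : ℤ | ts ≤ x ∧ v ∈ kCore (G.proj ts x) k} b))) ∧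
    (∀ cte a b, IsLeast {x : ℤ | (u, v, t) ∈ G.tCore k ts x} cte →
      IsLeast {x : ℤ | ts ≤ x ∧ u ∈ kCore (G.proj ts x) k} a →
      IsLeast {x : ℤ | ts ≤ x ∧ v ∈ kCore (G.proj ts x) k} b →
      cte = max (max a b) t) :=
  edge_core_time_eq_max_general G k ts u v t he ht
end

section
/- Let G be a temporal graph, k ≥ 1 an integer, [ts,te] a time window, and e a temporal edge. Then e belongs to the temporal k-core C_[ts,te] if and only if there exists a minimal core window [t1,t2] of e with [t1,t2] ⊆ [ts,te]. -/
variable {V : Type*} [Fintype V]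

/-- `[t1, t2]` is a minimal core window of the temporal edge `e`:
`e` lies in the temporal `k`-core of `[t1, t2]` but in no temporal `k`-core
of a window properly contained in `[t1, t2]`. -/
def MinCoreWindow (G : TemporalGraph V) (k : ℕ) (e : V × V × ℤ)
    (t1 t2 : ℤ) : Prop :=
  e ∈ G.tCore k t1 t2 ∧
  ∀ ts' te', t1 ≤ ts' → te' ≤ t2 → (ts', te') ≠ (t1, t2) →
    e ∉ G.tCore k ts' te'

namespace TemporalGraph

omit [Fintype V] in
theorem proj_mono_s7 (G : TemporalGraph V) {ts te ts' te' : ℤ} (hs : ts ≤ ts') (he : te' ≤ te) :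
    G.proj ts' te' ≤ G.proj ts te := by
  rintro u v ⟨t, hts, hte, hE⟩
  exact ⟨t, hs.trans hts, hte.trans he, hE⟩

theorem tCore_mono (G : TemporalGraph V) (k : ℕ) {ts te ts' te' : ℤ}
    (hs : ts ≤ ts') (he : te' ≤ te) :
    G.tCore k ts' te' ⊆ G.tCore k ts te := by
  rintro x ⟨hE, hts, hte, hu, hv⟩
  exact ⟨hE, hs.trans hts, hte.trans he,
    kCore_mono (G.proj_mono_s7 hs he) k hu, kCore_mono (G.proj_mono_s7 hs he) k hv⟩

omit [Fintype V] in
theorem le_of_mem_tCore {G : TemporalGraph V} {k : ℕ} {ts te : ℤ} {e : V × V × ℤ}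
    (he : e ∈ G.tCore k ts te) : ts ≤ te :=
  he.2.1.trans he.2.2.1

omit [Fintype V] in
theorem exists_minCoreWindow_of_mem_tCore {G : TemporalGraph V} {k : ℕ} {e : V × V × ℤ}
    {ts te : ℤ} (he : e ∈ G.tCore k ts te) :
    ∃ t1 t2, MinCoreWindow G k e t1 t2 ∧ ts ≤ t1 ∧ t2 ≤ te := by
  induction hn : (te - ts).toNat using Nat.strong_induction_on generalizing ts te with
  | _ n ih =>
  by_cases hmin : MinCoreWindow G k e ts te
  · exact ⟨ts, te, hmin, le_rfl, le_rfl⟩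
  obtain ⟨ts', te', hs, hte, hne, he'⟩ : ∃ ts' te', ts ≤ ts' ∧ te' ≤ te ∧
      (ts', te') ≠ (ts, te) ∧ e ∈ G.tCore k ts' te' := by
    simpa [MinCoreWindow, he] using hmin
  have hshorter : (te' - ts').toNat < n := by
    have := le_of_mem_tCore he'
    have : ¬(ts' = ts ∧ te' = te) := fun h => hne (Prod.ext h.1 h.2)
    omega
  obtain ⟨t1, t2, hwin, h1, h2⟩ := ih _ hshorter he' rfl
  exact ⟨t1, t2, hwin, hs.trans h1, h2.trans hte⟩

end TemporalGraph

theorem mem_tCore_iff_minCoreWindow_general (G : TemporalGraph V) (k : ℕ)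
    (ts te : ℤ) (e : V × V × ℤ) :
    e ∈ G.tCore k ts te ↔
      ∃ t1 t2, MinCoreWindow G k e t1 t2 ∧ ts ≤ t1 ∧ t2 ≤ te := by
  refine ⟨TemporalGraph.exists_minCoreWindow_of_mem_tCore, ?_⟩
  rintro ⟨t1, t2, ⟨he, -⟩, h1, h2⟩
  exact G.tCore_mono k h1 h2 he

theorem mem_tCore_iff_minCoreWindow (G : TemporalGraph V) (k : ℕ) (hk : 1 ≤ k)
    (ts te : ℤ) (hw : ts ≤ te) (e : V × V × ℤ) :
    e ∈ G.tCore k ts te ↔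
      ∃ t1 t2, MinCoreWindow G k e t1 t2 ∧ ts ≤ t1 ∧ t2 ≤ te :=
  mem_tCore_iff_minCoreWindow_general G k ts te e
end

section
/- Let G be a temporal graph and k ≥ 1 an integer. Suppose C_[ts,te] is nonempty and TTI(C_[ts,te]) = [ts,te]. Then there exists a temporal edge e with a minimal core window [t1,t2] such that (1) ts ≤ t1 and t2 = te, and (2) e has no minimal core window [t1',t2'] with ts ≤ t1' < t1. -/
variable {V : Type*} [Fintype V]

/-- `[a, b]` is the tightest time interval of the edge set `C`:
`a` and `b` are the minimum and maximum timestamps of the edges in `C`. -/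
def IsTTI (C : Set (V × V × ℤ)) (a b : ℤ) : Prop :=
  IsLeast {t | ∃ e ∈ C, e.2.2 = t} a ∧ IsGreatest {t | ∃ e ∈ C, e.2.2 = t} b

/-!
Take an edge `e` of the core whose timestamp is the end `te` of the tightest interval, and let
`t1` be the latest start for which `e` is still in the temporal core of `[t1, te]`. Any window
containing `e` ends no earlier than `te`, so maximality of `t1` makes `[t1, te]` a minimal core
window; and a minimal core window of `e` starting before `t1` would properly contain `[t1, te]`.
-/

section

variable {V : Type*} {G : TemporalGraph V} {k : ℕ} {e : V × V × ℤ}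

theorem TemporalGraph.exists_isGreatest_start_of_mem_tCore {ts : ℤ}
    (he : e ∈ G.tCore k ts e.2.2) : ∃ t1, IsGreatest {s | e ∈ G.tCore k s e.2.2} t1 :=
  Int.exists_greatest_of_bdd ⟨e.2.2, fun _ hs => hs.2.1⟩ ⟨ts, he⟩

theorem minCoreWindow_of_isGreatest_start {t1 : ℤ}
    (ht1 : IsGreatest {s | e ∈ G.tCore k s e.2.2} t1) : MinCoreWindow G k e t1 e.2.2 := by
  refine ⟨ht1.1, fun ts' te' hts' hte' hne hmem => hne ?_⟩
  obtain rfl : te' = e.2.2 := le_antisymm hte' hmem.2.2.1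
  rw [le_antisymm (ht1.2 hmem) hts']

theorem MinCoreWindow.le_start_of_mem_tCore {t1 t1' t2' : ℤ}
    (hw : MinCoreWindow G k e t1' t2') (he : e ∈ G.tCore k t1 e.2.2) : t1 ≤ t1' := by
  by_contra! hlt
  exact hw.2 t1 e.2.2 hlt.le hw.1.2.2.1 (fun h => hlt.ne' (congrArg Prod.fst h)) he

end

theorem valid_end_time_necessary_one_general (G : TemporalGraph V) (k : ℕ)
    (ts te : ℤ)
    (hTTI : IsTTI (G.tCore k ts te) ts te) :
    ∃ (e : V × V × ℤ) (t1 : ℤ), MinCoreWindow G k e t1 te ∧ ts ≤ t1 ∧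
      ∀ t1' t2', MinCoreWindow G k e t1' t2' → ts ≤ t1' → ¬ t1' < t1 := by
  obtain ⟨⟨e, he, rfl⟩, -⟩ := hTTI.2
  obtain ⟨t1, ht1⟩ := G.exists_isGreatest_start_of_mem_tCore he
  refine ⟨e, t1, minCoreWindow_of_isGreatest_start ht1, ht1.2 he, fun t1' t2' hw _ => ?_⟩
  exact not_lt.2 (hw.le_start_of_mem_tCore ht1.1)

theorem valid_end_time_necessary_one (G : TemporalGraph V) (k : ℕ)
    (hk : 1 ≤ k) (ts te : ℤ)
    (hne : (G.tCore k ts te).Nonempty)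
    (hTTI : IsTTI (G.tCore k ts te) ts te) :
    ∃ (e : V × V × ℤ) (t1 : ℤ), MinCoreWindow G k e t1 te ∧ ts ≤ t1 ∧
      ∀ t1' t2', MinCoreWindow G k e t1' t2' → ts ≤ t1' → ¬ t1' < t1 :=
  valid_end_time_necessary_one_general G k ts te hTTI
end

section
/- Let G be a temporal graph and k ≥ 1 an integer. Suppose C_[ts,te] is nonempty and TTI(C_[ts,te]) = [ts,te]. Then there exists a temporal edge e with a minimal core window [t1,t2] such that t1 = ts and t2 ≤ te. -/
variable {V : Type*} [Fintype V]

/-! An edge `e` whose timestamp is `ts` exists because `ts` is the least timestamp of the core.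
Take the least `t2` with `e ∈ C_[ts,t2]`. A window inside `[ts, t2]` whose core still contains `e`
must start at or before the timestamp of `e`, hence at `ts`, and by minimality end at `t2`. -/

theorem exists_minCoreWindow_of_mem_tCore_of_time_eq {V : Type*} {G : TemporalGraph V} {k : ℕ}
    {e : V × V × ℤ} {t te : ℤ} (he : e ∈ G.tCore k t te) (ht : e.2.2 = t) :
    ∃ t2 ≤ te, MinCoreWindow G k e t t2 := by
  obtain ⟨t2, hmem2, hleast⟩ := Int.exists_least_of_bdd (P := fun z => e ∈ G.tCore k t z)
    ⟨t, fun _ hz => ht ▸ hz.2.2.1⟩ ⟨te, he⟩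
  refine ⟨t2, hleast te he, hmem2, fun a b ha hb hab hmem => hab ?_⟩
  have ha' : a = t := le_antisymm (ht ▸ hmem.2.1) ha
  subst ha'
  rw [le_antisymm hb (hleast b hmem)]

theorem valid_end_time_necessary_two_general (G : TemporalGraph V) (k : ℕ)
    (ts te : ℤ)
    (hTTI : IsTTI (G.tCore k ts te) ts te) :
    ∃ (e : V × V × ℤ) (t2 : ℤ), MinCoreWindow G k e ts t2 ∧ t2 ≤ te := by
  obtain ⟨e, he, het⟩ := hTTI.1.1
  obtain ⟨t2, ht2te, hwin⟩ := exists_minCoreWindow_of_mem_tCore_of_time_eq he het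
  exact ⟨e, t2, hwin, ht2te⟩

theorem valid_end_time_necessary_two (G : TemporalGraph V) (k : ℕ)
    (hk : 1 ≤ k) (ts te : ℤ)
    (hne : (G.tCore k ts te).Nonempty)
    (hTTI : IsTTI (G.tCore k ts te) ts te) :
    ∃ (e : V × V × ℤ) (t2 : ℤ), MinCoreWindow G k e ts t2 ∧ t2 ≤ te :=
  valid_end_time_necessary_two_general G k ts te hTTI
end

section
/- Let G be a temporal graph and k ≥ 1 an integer. Let [t1,t2] be a minimal core window of some temporal edge such that no temporal edge of G has a minimal core window [t1',t2] with t1' > t1 (i.e., ending at t2 and starting strictly later than t1). Then there exists a temporal edge e with timestamp exactly t2 such that [t1,t2] is a minimal core window of e. -/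
/-!
If no edge of the temporal core of `[t1, t2]` has timestamp `t2`, then the `k`-core of
`G_[t1,t2]` is already `k`-dense in `G_[t1,t2-1]`, so the whole temporal core survives in the
window `[t1, t2-1]`, against minimality. Hence some core edge `f` has timestamp `t2`. Every window
containing `f` ends at `t2` or later, so the latest start `t1' ≥ t1` of a window `[t1', t2]` whose
core contains `f` yields a minimal core window of `f`, and maximality of `t1` forces `t1' = t1`.
-/

variable {V : Type*} [Fintype V]

theorem kDense_kCore (G : SimpleGraph V) (k : ℕ) : KDense G k (kCore G k) := by
  rintro v ⟨S, hS, hvS⟩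
  calc k ≤ (S ∩ G.neighborSet v).ncard := hS v hvS
    _ ≤ (kCore G k ∩ G.neighborSet v).ncard :=
        Set.ncard_le_ncard (Set.inter_subset_inter_left _ (Set.subset_sUnion_of_mem hS))
          (Set.toFinite _)

theorem KDense.of_adj {G H : SimpleGraph V} {k : ℕ} {S : Set V} (hS : KDense G k S)
    (hGH : ∀ v ∈ S, ∀ u ∈ S, G.Adj v u → H.Adj v u) : KDense H k S := by
  intro v hv
  refine (hS v hv).trans (Set.ncard_le_ncard ?_ (Set.toFinite _))
  rintro u ⟨hu, hvu⟩
  exact ⟨hu, hGH v hv u hu hvu⟩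

namespace TemporalGraph

variable {G : TemporalGraph V} {k : ℕ}

theorem tCore_subset_tCore_pred {t1 t2 : ℤ} (hend : ∀ f ∈ G.tCore k t1 t2, f.2.2 ≠ t2) :
    G.tCore k t1 t2 ⊆ G.tCore k t1 (t2 - 1) := by
  have hcore : kCore (G.proj t1 t2) k ⊆ kCore (G.proj t1 (t2 - 1)) k := by
    refine Set.subset_sUnion_of_mem ((kDense_kCore _ k).of_adj ?_)
    rintro v hv u hu ⟨t, ht1, ht2, hE⟩
    have htne : t ≠ t2 := by
      rintro rfl
      rcases hE with hE | hE
      · exact hend (v, u, t) ⟨hE, ht1, le_rfl, hv, hu⟩ rfl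
      · exact hend (u, v, t) ⟨hE, ht1, le_rfl, hu, hv⟩ rfl
    exact ⟨t, ht1, by omega, hE⟩
  rintro e he
  have het : e.2.2 ≠ t2 := hend e he
  exact ⟨he.1, he.2.1, by have := he.2.2.1; omega, hcore he.2.2.2.1, hcore he.2.2.2.2⟩

theorem _root_.MinCoreWindow.exists_mem_tCore_end {e : V × V × ℤ} {t1 t2 : ℤ}
    (he : MinCoreWindow G k e t1 t2) : ∃ f ∈ G.tCore k t1 t2, f.2.2 = t2 := by
  by_contra! hend
  exact he.2 t1 (t2 - 1) le_rfl (by omega) (by simp) (tCore_subset_tCore_pred hend he.1)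

omit [Fintype V] in
theorem exists_minCoreWindow_of_mem_tCore_end {f : V × V × ℤ} {t1 t2 : ℤ}
    (hf : f ∈ G.tCore k t1 t2) (hft : f.2.2 = t2) :
    ∃ t1', t1 ≤ t1' ∧ MinCoreWindow G k f t1' t2 := by
  obtain ⟨t1', ⟨ht1, hf'⟩, hlatest⟩ :=
    Int.exists_greatest_of_bdd (P := fun s => t1 ≤ s ∧ f ∈ G.tCore k s t2)
      ⟨t2, fun s hs => hs.2.2.1.trans hft.le⟩ ⟨t1, le_rfl, hf⟩
  refine ⟨t1', ht1, hf', fun ts' te' hts' hte' hne hmem => hne ?_⟩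
  have hte : te' = t2 := le_antisymm hte' (hft ▸ hmem.2.2.1)
  subst hte
  rw [le_antisymm (hlatest ts' ⟨ht1.trans hts', hmem⟩) hts']

end TemporalGraph

theorem exists_edge_at_end_of_min_window_general (G : TemporalGraph V) (k : ℕ)
    (t1 t2 : ℤ)
    (h : ∃ e : V × V × ℤ, MinCoreWindow G k e t1 t2)
    (hmax : ∀ (e : V × V × ℤ) (t1' : ℤ),
      MinCoreWindow G k e t1' t2 → ¬ t1 < t1') :
    ∃ e : V × V × ℤ, e.2.2 = t2 ∧ MinCoreWindow G k e t1 t2 := by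
  obtain ⟨e, he⟩ := h
  obtain ⟨f, hf, hft⟩ := he.exists_mem_tCore_end
  obtain ⟨t1', ht1, hmin⟩ := TemporalGraph.exists_minCoreWindow_of_mem_tCore_end hf hft
  obtain rfl : t1' = t1 := le_antisymm (not_lt.mp (hmax f t1' hmin)) ht1
  exact ⟨f, hft, hmin⟩

theorem exists_edge_at_end_of_min_window (G : TemporalGraph V) (k : ℕ)
    (hk : 1 ≤ k) (t1 t2 : ℤ)
    (h : ∃ e : V × V × ℤ, MinCoreWindow G k e t1 t2)
    (hmax : ∀ (e : V × V × ℤ) (t1' : ℤ),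
      MinCoreWindow G k e t1' t2 → ¬ t1 < t1') :
    ∃ e : V × V × ℤ, e.2.2 = t2 ∧ MinCoreWindow G k e t1 t2 :=
  exists_edge_at_end_of_min_window_general G k t1 t2 h hmax
end
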